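/- arXiv:2504.18967 — 4 statements merged into one kernel-verified Lean document; each statement's English description precedes it below -/
import Mathlib

section
/- Let d ≥ 2 and n ≥ 1 be integers. If 2·cos(2π/n) is not rational, then (2·cos(2π/n))/d is not an algebraic integer. -/
/-!
Put `α = 2 cos(2π/n)` and suppose `α / d` is an algebraic integer. The conjugates of `α` are
roots of the Vieta–Lucas polynomial `Cₙ - 2`, whose roots are the reals `2 cos θ`; a conjugate
of absolute value `2` would be `±2`, forcing `α = ±2 ∈ ℚ`. So every conjugate of `α` has
absolute value `< 2 ≤ d`, and every conjugate of `α / d` has absolute value `< 1`. The constant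
coefficient of the minimal polynomial of `α / d` over `ℤ` is then an integer of absolute value
`< 1`, hence `0`, so `α = 0 ∈ ℚ`.
-/

open Real Polynomial

theorem Polynomial.Chebyshev.exists_eq_two_mul_cos_of_eval_C_eq_two {n : ℤ} (hn : n ≠ 0)
    {z : ℂ} (hz : (C ℂ n).eval z = 2) : ∃ θ : ℝ, z = (2 * Real.cos θ : ℝ) := by
  obtain ⟨θ, hθ⟩ := Complex.cos_surjective (z / 2)
  have hz_cos : z = 2 * Complex.cos θ := by rw [hθ]; ring
  rw [hz_cos, C_two_mul_complex_cos] at hz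
  obtain ⟨k, hk⟩ := Complex.cos_eq_one_iff.mp (by linear_combination hz / 2)
  have hθ_real : θ = ((k * (2 * π) / n : ℝ) : ℂ) := by
    push_cast
    rw [hk]
    field_simp
  exact ⟨k * (2 * π) / n, by rw [hz_cos, hθ_real]; push_cast; rfl⟩

theorem Polynomial.coeff_zero_eq_zero_of_forall_norm_root_lt_one {p : ℤ[X]} (hp : p.Monic)
    (hdeg : 0 < p.natDegree) (h : ∀ z : ℂ, aeval z p = 0 → ‖z‖ < 1) : p.coeff 0 = 0 := by
  set q : ℂ[X] := p.map (algebraMap ℤ ℂ)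
  have hsplits : q.Splits := IsAlgClosed.splits q
  have hroots : ∀ z ∈ q.roots, ‖z‖ < 1 := fun z hz =>
    h z (by simpa [q, aeval_def, eval_map] using (mem_roots'.mp hz).2)
  obtain ⟨w, t, hwt⟩ : ∃ w t, q.roots = w ::ₘ t := by
    have : q.roots ≠ 0 := by
      rw [← Multiset.card_pos, ← hsplits.natDegree_eq_card_roots, hp.natDegree_map]
      exact hdeg
    obtain ⟨w, hw⟩ := Multiset.exists_mem_of_ne_zero this
    exact ⟨w, Multiset.exists_cons_of_mem hw⟩
  have hprod : ‖q.roots.prod‖ < 1 := by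
    have ht : ‖t.prod‖ ≤ 1 := by
      rw [← normHom_apply, map_multiset_prod]
      simpa using Multiset.prod_map_le_pow_card (f := (normHom : ℂ →*₀ ℝ)) (r := 1) (t := t)
        (fun z _ => norm_nonneg z) (fun z hz => (hroots z (by simp [hwt, hz])).le)
    rw [hwt, Multiset.prod_cons, norm_mul]
    exact mul_lt_one_of_nonneg_of_lt_one_left (norm_nonneg _) (hroots w (by simp [hwt])) ht
  have hcoeff : |p.coeff 0| < 1 := by
    rw [← Int.cast_lt (R := ℝ), Int.cast_abs, Int.cast_one, ← Complex.norm_intCast,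
      ← eq_intCast (algebraMap ℤ ℂ), ← coeff_map, hsplits.coeff_zero_eq_prod_roots_of_monic
      (hp.map _), norm_mul, norm_pow, norm_neg, norm_one, one_pow, one_mul]
    exact hprod
  exact Int.abs_lt_one_iff.mp hcoeff

theorem minpoly.eq_intCast_of_aeval_intCast_eq_zero {L : Type*} [Field L] [CharZero L]
    {x : L} (hx : IsIntegral ℤ x) {m : ℤ} (h : Polynomial.aeval (m : L) (minpoly ℤ x) = 0) :
    x = m := by
  have hroot : (minpoly ℚ x).IsRoot (m : ℚ) := by
    rw [minpoly.isIntegrallyClosed_eq_field_fractions' ℚ hx, IsRoot, eval_map_algebraMap,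
      ← (algebraMap ℚ L).injective.eq_iff, ← aeval_algebraMap_apply]
    simpa using h
  simpa using (minpoly.root hx.tower_top hroot).symm

theorem minpoly.aeval_algebraMap_mul_smul_eq_zero {R S : Type*} [CommRing R] [IsDomain R]
    [IsIntegrallyClosed R] [CommRing S] [IsDomain S] [Algebra R S] [Module.IsTorsionFree R S]
    {r : R} (hr : r ≠ 0) {s z : S} (hs : IsIntegral R s)
    (hz : Polynomial.aeval z (minpoly R s) = 0) :
    Polynomial.aeval (algebraMap R S r * z) (minpoly R (r • s)) = 0 := by
  rw [IsIntegrallyClosed.minpoly_smul hr hs]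
  exact scaleRoots_aeval_eq_zero hz

theorem eq_zero_of_isIntegral_of_forall_norm_root_minpoly_lt_one {x : ℂ} (hx : IsIntegral ℤ x)
    (h : ∀ z : ℂ, aeval z (minpoly ℤ x) = 0 → ‖z‖ < 1) : x = 0 := by
  have h0 := coeff_zero_eq_zero_of_forall_norm_root_lt_one (minpoly.monic hx)
    (minpoly.natDegree_pos hx) h
  rw [← minpoly.coeff_zero_eq_zero hx.tower_top (A := ℚ),
    minpoly.isIntegrallyClosed_eq_field_fractions' ℚ hx, coeff_map, h0, map_zero]

theorem eq_zero_of_isIntegral_div_of_forall_norm_root_minpoly_lt {α : ℂ} {d : ℕ} (hd : d ≠ 0)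
    (hx : IsIntegral ℤ (α / d)) (h : ∀ z : ℂ, aeval z (minpoly ℤ α) = 0 → ‖z‖ < d) :
    α = 0 := by
  have hdC : (d : ℂ) ≠ 0 := Nat.cast_ne_zero.mpr hd
  have hα : α = (d : ℤ) • (α / d) := by
    rw [zsmul_eq_mul, Int.cast_natCast, mul_div_cancel₀ _ hdC]
  have hx0 : α / d = 0 := by
    refine eq_zero_of_isIntegral_of_forall_norm_root_minpoly_lt_one hx fun z hz => ?_
    have hroot := minpoly.aeval_algebraMap_mul_smul_eq_zero (Int.natCast_ne_zero.mpr hd) hx hz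
    rw [← hα] at hroot
    have hdz := h _ hroot
    rw [norm_mul, algebraMap_int_eq, eq_intCast, Int.cast_natCast, Complex.norm_natCast] at hdz
    exact (mul_lt_iff_lt_one_right (by positivity)).mp hdz
  simpa [hdC] using hx0

theorem norm_lt_two_of_aeval_minpoly_eq_zero {n : ℤ} (hn : n ≠ 0) {α : ℂ}
    (hα : IsIntegral ℤ α) (hCα : (Chebyshev.C ℂ n).eval α = 2) (hα_two : α ≠ 2)
    (hα_neg_two : α ≠ -2) {z : ℂ} (hz : aeval z (minpoly ℤ α) = 0) : ‖z‖ < 2 := by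
  have hCz : (Chebyshev.C ℂ n).eval z = 2 := by
    have hdvd := minpoly.isIntegrallyClosed_dvd hα (p := Chebyshev.C ℤ n - 2)
      (by simp [Chebyshev.aeval_C, hCα, map_ofNat])
    simpa [Chebyshev.aeval_C, map_ofNat, sub_eq_zero] using
      aeval_eq_zero_of_dvd_aeval_eq_zero hdvd hz
  obtain ⟨θ, rfl⟩ := Chebyshev.exists_eq_two_mul_cos_of_eval_C_eq_two hn hCz
  rw [Complex.norm_real, Real.norm_eq_abs, abs_mul, abs_two]
  refine lt_of_le_of_ne (by nlinarith [abs_cos_le_one θ]) fun h2 => ?_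
  obtain hcos | hcos := abs_eq zero_le_one |>.mp (by linarith : |Real.cos θ| = 1)
  · exact hα_two
      (minpoly.eq_intCast_of_aeval_intCast_eq_zero hα (m := 2) (by simpa [hcos] using hz))
  · exact hα_neg_two (by simpa using
      minpoly.eq_intCast_of_aeval_intCast_eq_zero hα (m := -2) (by simpa [hcos] using hz))

theorem two_cos_div_not_algebraic_integer (n d : ℕ) (hn : 1 ≤ n) (hd : 2 ≤ d)
    (h : ¬ ∃ q : ℚ, (q : ℝ) = 2 * Real.cos (2 * Real.pi / n)) :
    ¬ IsIntegral ℤ ((2 * Real.cos (2 * Real.pi / n)) / d) := by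
  set α := 2 * Real.cos (2 * π / n)
  intro hx
  have hα_ne (q : ℚ) : (α : ℂ) ≠ q := fun hq => h ⟨q, by exact_mod_cast hq.symm⟩
  have hCα : (Chebyshev.C ℂ n).eval (α : ℂ) = 2 := by
    have hn0 : (n : ℂ) ≠ 0 := by exact_mod_cast (by omega : n ≠ 0)
    push_cast [α]
    rw [Chebyshev.C_two_mul_complex_cos, Int.cast_natCast, mul_div_cancel₀ _ hn0,
      Complex.cos_two_pi, mul_one]
  have hdC : (d : ℂ) ≠ 0 := by exact_mod_cast (by omega : d ≠ 0)
  have hxC : IsIntegral ℤ ((α : ℂ) / d) := by simpa using hx.algebraMap (B := ℂ)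
  have hα : IsIntegral ℤ (α : ℂ) := by
    simpa [div_mul_cancel₀ _ hdC] using hxC.mul (isIntegral_algebraMap (x := (d : ℤ)))
  have hα0 : (α : ℂ) = 0 := eq_zero_of_isIntegral_div_of_forall_norm_root_minpoly_lt (by omega)
    hxC fun z hz => (norm_lt_two_of_aeval_minpoly_eq_zero (by omega) hα hCα
      (by simpa using hα_ne 2) (by simpa using hα_ne (-2)) hz).trans_le (by exact_mod_cast hd)
  exact hα_ne 0 (by simpa using hα0)
end

section
/- Let G be a finite group, g ∈ G, and π an irreducible complex representation of G with character χ_π. Then (χ_π(g)/dim π) · [G : Z_G(g)] is an algebraic integer, where Z_G(g) is the centralizer of g in G. -/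
/-!
The class sum `T = ∑_{h ∼ g} ρ(h)` commutes with every `ρ(x)`, so by Schur's lemma it is a scalar
`c`. Taking traces gives `[G : Z_G(g)] χ(g) = c · dim V`, so the number in question is `c`. As `T`
is the image of an element of the group ring `ℤ[G]`, which is a finitely generated `ℤ`-module, `T`
is integral over `ℤ`, and hence so is `c`.
-/

open CategoryTheory

theorem Subgroup.index_centralizer_eq_ncard_conjugatesOf {G : Type*} [Group G] (g : G) :
    (Subgroup.centralizer {g}).index = (conjugatesOf g).ncard := by
  rw [Subgroup.centralizer_eq_comap_stabilizer]
  refine (Subgroup.index_comap_of_surjective _ ConjAct.toConjAct.surjective).trans ?_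
  rw [MulAction.index_stabilizer, ConjAct.orbit_eq_carrier_conjClasses]
  rfl

theorem mem_conjugatesOf_conj_iff {G : Type*} [Group G] {g h : G} (x : G) :
    x * h * x⁻¹ ∈ conjugatesOf g ↔ h ∈ conjugatesOf g :=
  ⟨fun hh => hh.trans (isConj_iff.2 ⟨x⁻¹, by group⟩), fun hh => hh.trans (isConj_iff.2 ⟨x, rfl⟩)⟩

theorem MonoidHom.isIntegral_sum {G A : Type*} [Monoid G] [Finite G] [Ring A] (ρ : G →* A)
    (s : Finset G) : IsIntegral ℤ (∑ h ∈ s, ρ h) := by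
  have hlift : MonoidAlgebra.lift ℤ A G ρ (∑ h ∈ s, MonoidAlgebra.single h 1) = ∑ h ∈ s, ρ h := by
    simp [MonoidAlgebra.lift_single]
  rw [← hlift]
  exact (IsIntegral.of_finite ℤ _).map _

namespace FDRep

variable {k G : Type*} [Field k]

section Monoid

variable [Monoid G] (V : FDRep k G)

instance nontrivial_of_simple [Simple V] : Nontrivial V := by
  rw [← not_subsingleton_iff_nontrivial]
  intro h
  refine id_nonzero V (Action.hom_ext _ _ ?_)
  ext v
  exact Subsingleton.elim _ _

theorem exists_eq_algebraMap_of_commute [IsAlgClosed k] [Simple V] {f : Module.End k V}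
    (hf : ∀ g, Commute (V.ρ g) f) : ∃ c : k, f = algebraMap k _ c := by
  let φ : V ⟶ V := ⟨InducedCategory.homMk (ModuleCat.ofHom f), fun g => by
    ext v
    exact LinearMap.congr_fun (hf g).symm v⟩
  obtain ⟨c, hc⟩ := endomorphism_simple_eq_smul_id k φ
  exact ⟨c, (congrArg (fun ψ : V ⟶ V => ψ.hom.hom.hom) hc).symm⟩

end Monoid

section Group

variable [Group G] (V : FDRep k G) (g : G) [Fintype (conjugatesOf g)]

theorem commute_sum_conjugatesOf (x : G) :
    Commute (V.ρ x) (∑ h ∈ (conjugatesOf g).toFinset, V.ρ h) := by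
  rw [Commute, SemiconjBy, Finset.mul_sum, Finset.sum_mul]
  refine Finset.sum_equiv (MulAut.conj x).toEquiv (fun h => ?_) (fun h _ => ?_)
  · simp [mem_conjugatesOf_conj_iff]
  · simp [← map_mul]

theorem trace_sum_conjugatesOf :
    LinearMap.trace k V (∑ h ∈ (conjugatesOf g).toFinset, V.ρ h) =
      (conjugatesOf g).ncard * V.character g := by
  rw [map_sum, Set.ncard_eq_toFinset_card', ← nsmul_eq_mul, ← Finset.sum_const]
  refine Finset.sum_congr rfl fun h hh => ?_
  have hconj : IsConj g h := (Set.mem_toFinset (s := conjugatesOf g)).mp hh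
  obtain ⟨x, rfl⟩ := isConj_iff.mp hconj
  exact V.char_conj g x

end Group

end FDRep

theorem char_mul_index_div_dim_isIntegral (G : Type) [Group G] [Fintype G]
    (V : FDRep ℂ G) [Simple V] (g : G) :
    IsIntegral ℤ
      (V.character g / (Module.finrank ℂ V : ℂ) * ((Subgroup.centralizer {g}).index : ℂ)) := by
  classical
  obtain ⟨c, hc⟩ := V.exists_eq_algebraMap_of_commute (V.commute_sum_conjugatesOf g)
  have hc_int : IsIntegral ℤ c := by
    have hsum_int := V.ρ.isIntegral_sum (conjugatesOf g).toFinset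
    rwa [hc, isIntegral_algebraMap_iff (algebraMap ℂ _).injective] at hsum_int
  have htrace : ((Subgroup.centralizer {g}).index : ℂ) * V.character g =
      c * Module.finrank ℂ V := by
    rw [Subgroup.index_centralizer_eq_ncard_conjugatesOf, ← V.trace_sum_conjugatesOf, hc,
      Module.algebraMap_end_eq_smul_id, map_smul, LinearMap.trace_id, smul_eq_mul]
  have hdim : (Module.finrank ℂ V : ℂ) ≠ 0 := by exact_mod_cast Module.finrank_pos.ne'
  convert hc_int using 1
  field_simp
  linear_combination htrace
end

section
/- For m even and l a positive integer, the number of integers k with 1 ≤ k ≤ m/2 − 1 such that k is an odd multiple of m/gcd(m, 4l) equals ⌊((m−2)·gcd(m,4l) + 2m)/(4m)⌋, provided 4l/gcd(m,4l) is odd. -/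
theorem count_odd_multiples (m l : ℕ) (hm : 0 < m) (he : Even m) (hl : 0 < l)
    (hodd : Odd (4 * l / Nat.gcd m (4 * l))) :
    {k : ℕ | k ∈ Finset.Ico 1 (m / 2) ∧
        ∃ u : ℕ, k = (2 * u + 1) * (m / Nat.gcd m (4 * l))}.ncard =
      ((m - 2) * Nat.gcd m (4 * l) + 2 * m) / (4 * m) := by
  set g := Nat.gcd m (4 * l) with hg
  have hg4l : g ∣ 4 * l := Nat.gcd_dvd_right _ _
  have hgm : g ∣ m := Nat.gcd_dvd_left _ _
  have hgpos : 0 < g := Nat.gcd_pos_of_pos_left _ hm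
  -- 4 ∣ g
  have h4g : 4 ∣ g := by
    have ht : g * (4 * l / g) = 4 * l := Nat.mul_div_cancel' hg4l
    have h2 : Nat.Coprime 2 (4 * l / g) := Nat.coprime_two_left.mpr hodd
    have hcop : Nat.Coprime 4 (4 * l / g) := by
      have := h2.mul h2
      simpa using this
    have hdvd : (4:ℕ) ∣ g * (4 * l / g) := by rw [ht]; exact ⟨l, rfl⟩
    exact hcop.dvd_of_dvd_mul_right hdvd
  obtain ⟨c, hc⟩ := h4g
  obtain ⟨d, hd⟩ := hgm
  have hdpos : 0 < d := by
    rcases Nat.eq_zero_or_pos d with h | h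
    · subst h; simp at hd; omega
    · exact h
  have hcpos : 0 < c := by omega
  have hmd : m / g = d := by rw [hd]; exact Nat.mul_div_cancel_left _ hgpos
  obtain ⟨e, rfl⟩ : ∃ e, d = e + 1 := ⟨d - 1, by omega⟩
  have hmval : m = 4 * c * (e + 1) := by rw [hd, hc]
  have hm4 : m = 4 * (c * (e + 1)) := by rw [hmval]; ring
  have hm2 : m / 2 = 2 * (c * (e + 1)) := by omega
  -- the set is a finite image
  have hset : {k : ℕ | k ∈ Finset.Ico 1 (m / 2) ∧
      ∃ u : ℕ, k = (2 * u + 1) * (m / g)} =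
      ↑((Finset.range c).image fun u => (2 * u + 1) * (e + 1)) := by
    ext k
    simp only [Set.mem_setOf_eq, Finset.coe_image, Set.mem_image, Finset.mem_coe,
      Finset.mem_range, Finset.mem_Ico, hmd, hm2]
    constructor
    · rintro ⟨⟨hk1, hk2⟩, u, rfl⟩
      refine ⟨u, ?_, rfl⟩
      have h1 : (2 * u + 1) * (e + 1) < (2 * c) * (e + 1) := by
        rw [mul_assoc]; exact hk2
      have h2 := Nat.lt_of_mul_lt_mul_right h1
      omega
    · rintro ⟨u, hu, rfl⟩
      refine ⟨⟨Nat.mul_pos (by omega) (by omega), ?_⟩, u, rfl⟩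
      calc (2 * u + 1) * (e + 1) < (2 * c) * (e + 1) :=
            (Nat.mul_lt_mul_right (by omega)).mpr (by omega)
        _ = 2 * (c * (e + 1)) := by ring
  rw [hset, Set.ncard_coe_finset, Finset.card_image_of_injective _
    (fun a b h => by
      have := Nat.eq_of_mul_eq_mul_right (show 0 < e + 1 by omega) h
      omega),
    Finset.card_range]
  -- RHS arithmetic: equals c
  obtain ⟨f, rfl⟩ : ∃ f, c = f + 1 := ⟨c - 1, by omega⟩
  have hm2' : 2 ≤ m := by omega
  have hmm : m - 2 = 4 * ((f + 1) * e) + 4 * f + 2 := by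
    have : m = 4 * ((f + 1) * e) + 4 * f + 4 := by rw [hmval]; ring
    omega
  have hexp : (m - 2) * g + 2 * m =
      16 * (f + 1) ^ 2 * (e + 1) + 8 * ((f + 1) * e) := by
    rw [hmm, hc, hmval]; ring
  symm
  rw [hexp]
  apply Nat.div_eq_of_lt_le
  · have h1 : (f + 1) * (4 * m) = 16 * (f + 1) ^ 2 * (e + 1) := by
      rw [hmval]; ring
    rw [h1]; exact Nat.le_add_right _ _
  · have h2 : (f + 1 + 1) * (4 * m) =
        16 * (f + 1) ^ 2 * (e + 1) + (16 * ((f + 1) * e) + 16 * (f + 1)) := by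
      rw [hmval]; ring
    rw [h2]
    omega
end

section
/- Let q be a prime, and suppose that for each a the proportion of partitions λ ⊢ a with υ_q(f_λ) ≥ r + 2k + (q−1)log_q(a) tends to 1 as a → ∞ (where f_λ is the degree of the irreducible S_a-representation indexed by λ). Then the proportion of bipartitions (α, β) ⊨ n satisfying υ_q(f_α) + υ_q(f_β) ≥ r + υ_q(2^k · n!/(n−k)!) also tends to 1 as n → ∞. -/
open Filter Topology

private lemma bvp_digitsum_pos (q m : ℕ) (hm : m ≠ 0) : 1 ≤ (q.digits m).sum := by
  have hne : q.digits m ≠ [] := Nat.digits_ne_nil_iff_ne_zero.mpr hm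
  have hmem := List.getLast_mem hne
  have hpos : 0 < (q.digits m).getLast hne :=
    Nat.pos_of_ne_zero (Nat.getLast_digit_ne_zero q hm)
  calc 1 ≤ (q.digits m).getLast hne := hpos
    _ ≤ (q.digits m).sum := List.single_le_sum (fun _ _ => Nat.zero_le _) _ hmem

private lemma bvp_val_fact_le (q m : ℕ) [hq : Fact q.Prime] (hm : 1 ≤ m) :
    padicValNat q m.factorial ≤ m - 1 := by
  have h := sub_one_mul_padicValNat_factorial (p := q) m
  have hq2 : 2 ≤ q := hq.out.two_le
  have h1 : padicValNat q m.factorial ≤ (q - 1) * padicValNat q m.factorial :=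
    Nat.le_mul_of_pos_left _ (by omega)
  have h2 : m - (q.digits m).sum ≤ m - 1 :=
    Nat.sub_le_sub_left (bvp_digitsum_pos q m (by omega)) m
  omega

/-- The key valuation bound: `υ_q(2^k · n!/(n-k)!) ≤ 2k + (q-1) log_q m` when `n ≤ 2m`. -/
private lemma bvp_valuation_bound (q k n m : ℕ) (hq : q.Prime) (hkn : k ≤ n)
    (hm1 : 1 ≤ m) (hnm : n ≤ 2 * m) :
    (padicValNat q (2 ^ k * (n.factorial / (n - k).factorial)) : ℝ)
      ≤ 2 * k + ((q : ℝ) - 1) * Real.logb q m := by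
  haveI := Fact.mk hq
  have hq2 : 2 ≤ q := hq.two_le
  have hqR : (1 : ℝ) < q := by exact_mod_cast hq.one_lt
  have hlogm : 0 ≤ Real.logb q m := Real.logb_nonneg hqR (by exact_mod_cast hm1)
  have hq1R : (1 : ℝ) ≤ (q : ℝ) - 1 := by
    have : (2 : ℝ) ≤ q := by exact_mod_cast hq2
    linarith
  rcases Nat.eq_zero_or_pos k with rfl | hk
  · simp only [pow_zero, Nat.sub_zero, Nat.div_self (Nat.factorial_pos n), mul_one,
      padicValNat.one, Nat.cast_zero]
    nlinarith
  · have hn1 : 1 ≤ n := le_trans hk hkn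
    have hfd : n.factorial / (n - k).factorial = n.choose k * k.factorial := by
      have h := Nat.choose_mul_factorial_mul_factorial hkn
      rw [← h]
      exact Nat.mul_div_cancel _ (Nat.factorial_pos _)
    rw [hfd]
    have hchoose_ne : n.choose k ≠ 0 := (Nat.choose_pos hkn).ne'
    rw [padicValNat.mul (pow_ne_zero _ two_ne_zero)
        (mul_ne_zero hchoose_ne (Nat.factorial_ne_zero _)),
      padicValNat.mul hchoose_ne (Nat.factorial_ne_zero _)]
    have h1 : padicValNat q (2 ^ k) ≤ k := by
      rcases eq_or_ne q 2 with rfl | hq2'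
      · rw [padicValNat.prime_pow]
      · rw [padicValNat.eq_zero_of_not_dvd]
        · exact Nat.zero_le _
        · intro hdvd
          have h2d : q ∣ 2 := hq.dvd_of_dvd_pow hdvd
          exact hq2' ((Nat.prime_dvd_prime_iff_eq hq Nat.prime_two).mp h2d)
    have h2 : padicValNat q (n.choose k) ≤ Nat.log q n := by
      rw [← Nat.factorization_def _ hq]
      exact Nat.factorization_choose_le_log
    have h3 : padicValNat q k.factorial ≤ k - 1 := bvp_val_fact_le q k hk
    -- log bound: (Nat.log q n : ℝ) ≤ Real.logb q m + 1
    have h4 : (Nat.log q n : ℝ) ≤ Real.logb q m + 1 := by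
      set L := Nat.log q n with hL
      rcases Nat.eq_zero_or_pos L with hL0 | hLpos
      · rw [hL0]; push_cast; linarith
      · have hpow : q ^ L ≤ n := Nat.pow_log_le_self q (by omega)
        have hpow2 : q * q ^ (L - 1) ≤ q * m := by
          have : q ^ L = q * q ^ (L - 1) := by
            rw [← pow_succ']
            congr 1
            omega
          calc q * q ^ (L - 1) = q ^ L := this.symm
            _ ≤ n := hpow
            _ ≤ 2 * m := hnm
            _ ≤ q * m := Nat.mul_le_mul_right m hq2
        have hpow3 : q ^ (L - 1) ≤ m := Nat.le_of_mul_le_mul_left hpow2 (by omega)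
        have hlog : ((L - 1 : ℕ) : ℝ) ≤ Real.logb q m := by
          have hbase : Real.logb q ((q : ℝ) ^ (L - 1 : ℕ)) ≤ Real.logb q m := by
            apply Real.logb_le_logb_of_le hqR (by positivity)
            exact_mod_cast hpow3
          rwa [Real.logb_pow, Real.logb_self_eq_one hqR, mul_one] at hbase
        have : (L : ℝ) = ((L - 1 : ℕ) : ℝ) + 1 := by
          have : L - 1 + 1 = L := by omega
          exact_mod_cast (congrArg (Nat.cast (R := ℝ)) this).symm
        rw [this]
        linarith
    have hcast : ((k - 1 : ℕ) : ℝ) ≤ (k : ℝ) - 1 := by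
      rw [Nat.cast_sub hk]; push_cast; linarith
    push_cast
    have hb1 : (padicValNat q (2 ^ k) : ℝ) ≤ k := by exact_mod_cast h1
    have hb2 : (padicValNat q (n.choose k) : ℝ) ≤ (Nat.log q n : ℝ) := by exact_mod_cast h2
    have hb3 : (padicValNat q k.factorial : ℝ) ≤ (k : ℝ) - 1 := by
      calc (padicValNat q k.factorial : ℝ) ≤ ((k - 1 : ℕ) : ℝ) := by exact_mod_cast h3
        _ ≤ (k : ℝ) - 1 := hcast
    have hqlog : Real.logb q m ≤ ((q : ℝ) - 1) * Real.logb q m := by nlinarith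
    linarith

private lemma bvp_card_fst {α β : Type*} [Fintype α] [Fintype β]
    (Q : α × β → Prop) (P1 : α → Prop) (h : ∀ p : α × β, P1 p.1 → Q p) :
    Nat.card {x : α // P1 x} * Fintype.card β ≤ Nat.card {p : α × β // Q p} := by
  classical
  have e : {p : α × β // P1 p.1} ≃ {x : α // P1 x} × β :=
    { toFun := fun p => (⟨p.1.1, p.2⟩, p.1.2)
      invFun := fun x => ⟨(x.1.1, x.2), x.1.2⟩
      left_inv := fun _ => rfl
      right_inv := fun _ => rfl }
  have h1 : Nat.card {p : α × β // P1 p.1} = Nat.card {x : α // P1 x} * Fintype.card β := by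
    rw [Nat.card_congr e, Nat.card_prod, Nat.card_eq_fintype_card, Nat.card_eq_fintype_card]
  rw [← h1, Nat.card_eq_fintype_card, Nat.card_eq_fintype_card]
  exact Fintype.card_subtype_mono _ _ (fun p hp => h p hp)

private lemma bvp_card_snd {α β : Type*} [Fintype α] [Fintype β]
    (Q : α × β → Prop) (P2 : β → Prop) (h : ∀ p : α × β, P2 p.2 → Q p) :
    Fintype.card α * Nat.card {y : β // P2 y} ≤ Nat.card {p : α × β // Q p} := by
  classical
  have e : {p : α × β // P2 p.2} ≃ α × {y : β // P2 y} :=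
    { toFun := fun p => (p.1.1, ⟨p.1.2, p.2⟩)
      invFun := fun x => ⟨(x.1, x.2.1), x.2.2⟩
      left_inv := fun _ => rfl
      right_inv := fun _ => rfl }
  have h1 : Nat.card {p : α × β // P2 p.2} = Fintype.card α * Nat.card {y : β // P2 y} := by
    rw [Nat.card_congr e, Nat.card_prod, Nat.card_eq_fintype_card]
  rw [← h1, Nat.card_eq_fintype_card, Nat.card_eq_fintype_card]
  exact Fintype.card_subtype_mono _ _ (fun p hp => h p hp)

theorem bipartition_valuation_proportion (q r k : ℕ) (hq : q.Prime)
    (f : (a : ℕ) → Nat.Partition a → ℕ)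
    (hf : Tendsto
      (fun a : ℕ =>
        (Nat.card {l : Nat.Partition a //
            (r + 2 * k : ℝ) + (q - 1) * Real.logb q a ≤ padicValNat q (f a l)} : ℝ) /
          (Fintype.card (Nat.Partition a) : ℝ))
      atTop (nhds 1)) :
    Tendsto
      (fun n : ℕ =>
        ((∑ a ∈ Finset.range (n + 1),
            Nat.card {p : Nat.Partition a × Nat.Partition (n - a) //
              r + padicValNat q (2 ^ k * (n.factorial / (n - k).factorial)) ≤
                padicValNat q (f a p.1) + padicValNat q (f (n - a) p.2)} : ℕ) : ℝ) /
          ((∑ a ∈ Finset.range (n + 1),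
              Fintype.card (Nat.Partition a) * Fintype.card (Nat.Partition (n - a)) : ℕ) : ℝ))
      atTop (nhds 1) := by
  classical
  have hq1 : 1 < q := hq.one_lt
  rw [Metric.tendsto_atTop] at hf ⊢
  intro ε hε
  obtain ⟨A, hA⟩ := hf (ε / 2) (by positivity)
  refine ⟨2 * A + k + 2, fun n hn => ?_⟩
  set P : ℕ → ℕ := fun a => Fintype.card (Nat.Partition a) with hPdef
  set M : ℕ → ℕ := fun a => Nat.card {p : Nat.Partition a × Nat.Partition (n - a) //
      r + padicValNat q (2 ^ k * (n.factorial / (n - k).factorial)) ≤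
        padicValNat q (f a p.1) + padicValNat q (f (n - a) p.2)} with hMdef
  set G : ℕ → ℕ := fun a => Nat.card {l : Nat.Partition a //
      (r + 2 * k : ℝ) + (q - 1) * Real.logb q a ≤ padicValNat q (f a l)} with hGdef
  have hPpos : ∀ a, 0 < P a := fun a => Fintype.card_pos
  -- pointwise good bound
  have key : ∀ a ∈ Finset.range (n + 1),
      (P a : ℝ) * P (n - a) - M a ≤ (ε / 2) * ((P a : ℝ) * P (n - a)) := by
    intro a ha
    rw [Finset.mem_range] at ha
    have han : a ≤ n := by omega
    -- extract the hypothesis bound for a given index b with A ≤ b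
    have hGb : ∀ b, A ≤ b → (P b : ℝ) - G b ≤ (ε / 2) * P b := by
      intro b hb
      have hd := hA b hb
      have hPb : (0 : ℝ) < P b := by exact_mod_cast hPpos b
      rw [Real.dist_eq, abs_lt] at hd
      have h1 : 1 - ε / 2 < (G b : ℝ) / P b := by linarith [hd.1]
      have h2 : (1 - ε / 2) * P b < G b := by
        rw [← lt_div_iff₀ hPb] at *
        linarith
      nlinarith
    rcases le_or_gt (n - a) a with hcase | hcase
    · -- a is the big side
      have hn2a : n ≤ 2 * a := by omega
      have ha1 : 1 ≤ a := by omega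
      have haA : A ≤ a := by omega
      have hkn : k ≤ n := by omega
      have himp : ∀ p : Nat.Partition a × Nat.Partition (n - a),
          ((r + 2 * k : ℝ) + (q - 1) * Real.logb q a ≤ padicValNat q (f a p.1)) →
          r + padicValNat q (2 ^ k * (n.factorial / (n - k).factorial)) ≤
            padicValNat q (f a p.1) + padicValNat q (f (n - a) p.2) := by
        intro p hp
        have hv := bvp_valuation_bound q k n a hq hkn ha1 hn2a
        have hreal : ((r + padicValNat q (2 ^ k * (n.factorial / (n - k).factorial)) : ℕ) : ℝ)
            ≤ ((padicValNat q (f a p.1) : ℕ) : ℝ) := by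
          push_cast
          push_cast at hp
          linarith
        have := Nat.cast_le (α := ℝ).mp hreal
        omega
      have hcard : G a * P (n - a) ≤ M a := bvp_card_fst _ _ himp
      have hG := hGb a haA
      have hc : (G a : ℝ) * P (n - a) ≤ (M a : ℝ) := by exact_mod_cast hcard
      have hPna : (0 : ℝ) ≤ (P (n - a) : ℝ) := by positivity
      nlinarith
    · -- n - a is the big side
      have hn2a : n ≤ 2 * (n - a) := by omega
      have ha1 : 1 ≤ n - a := by omega
      have haA : A ≤ n - a := by omega
      have hkn : k ≤ n := by omega
      have himp : ∀ p : Nat.Partition a × Nat.Partition (n - a),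
          ((r + 2 * k : ℝ) + (q - 1) * Real.logb q (n - a : ℕ) ≤ padicValNat q (f (n - a) p.2)) →
          r + padicValNat q (2 ^ k * (n.factorial / (n - k).factorial)) ≤
            padicValNat q (f a p.1) + padicValNat q (f (n - a) p.2) := by
        intro p hp
        have hv := bvp_valuation_bound q k n (n - a) hq hkn ha1 hn2a
        have hreal : ((r + padicValNat q (2 ^ k * (n.factorial / (n - k).factorial)) : ℕ) : ℝ)
            ≤ ((padicValNat q (f (n - a) p.2) : ℕ) : ℝ) := by
          push_cast
          push_cast at hp
          linarith
        have := Nat.cast_le (α := ℝ).mp hreal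
        omega
      have hcard : P a * G (n - a) ≤ M a := bvp_card_snd _ _ himp
      have hG := hGb (n - a) haA
      have hc : (P a : ℝ) * G (n - a) ≤ (M a : ℝ) := by exact_mod_cast hcard
      have hPa : (0 : ℝ) ≤ (P a : ℝ) := by positivity
      nlinarith
  -- sums
  set N : ℕ := ∑ a ∈ Finset.range (n + 1), M a with hNdef
  set D : ℕ := ∑ a ∈ Finset.range (n + 1), P a * P (n - a) with hDdef
  have hDpos : 0 < D := by
    apply Finset.sum_pos
    · intro a _
      exact Nat.mul_pos (hPpos a) (hPpos (n - a))
    · exact Finset.nonempty_range_add_one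
  have hDposR : (0 : ℝ) < (D : ℝ) := by exact_mod_cast hDpos
  have hND : N ≤ D := by
    apply Finset.sum_le_sum
    intro a _
    calc M a ≤ Fintype.card (Nat.Partition a × Nat.Partition (n - a)) := by
          rw [hMdef]
          simp only
          rw [Nat.card_eq_fintype_card]
          exact Fintype.card_subtype_le _
      _ = P a * P (n - a) := Fintype.card_prod _ _
  have hsum : (D : ℝ) - N ≤ (ε / 2) * D := by
    rw [hNdef, hDdef]
    push_cast
    rw [← Finset.sum_sub_distrib, Finset.mul_sum]
    exact Finset.sum_le_sum key
  have hNDr : (N : ℝ) ≤ D := by exact_mod_cast hND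
  have hquot : (N : ℝ) / D ≤ 1 := by
    rw [div_le_one hDposR]; exact hNDr
  have hquot2 : 1 - ε / 2 ≤ (N : ℝ) / D := by
    rw [le_div_iff₀ hDposR]
    nlinarith
  rw [Real.dist_eq, abs_lt]
  constructor <;> [skip; linarith]
  linarith
end
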